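/- arXiv:1711.00250 — 2 statements merged into one kernel-verified Lean document; each statement's English description precedes it below -/
import Mathlib

section
/- Let M ≤ N and K = N − M. Let Q = [Q1 | Q2] be an N×N real orthogonal matrix, with Q1 consisting of the first M columns and Q2 of the last K columns. Then for every N×M real matrix R, |det([R | Q2])| = |det(Q1ᵀ ⬝ R)|. -/
open Matrix

/-- The square `N × N` matrix obtained by placing the columns of an `N × M` matrix `X`
before the columns of an `N × K` matrix `Y`, given `M + K = N`. -/
noncomputable def catCols {N M K : ℕ} (h : M + K = N)
    (X : Matrix (Fin N) (Fin M) ℝ) (Y : Matrix (Fin N) (Fin K) ℝ) :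
    Matrix (Fin N) (Fin N) ℝ :=
  (Matrix.fromCols X Y).submatrix id (fun j => finSumFinEquiv.symm (Fin.cast h.symm j))

/-!
Write `Q = [Q1 | Q2]`. Since `Q` is orthogonal, `Qᵀ [R | Q2]` is, up to a simultaneous
permutation of rows and columns, the block lower-triangular matrix `[[Q1ᵀR, 0], [Q2ᵀR, 1]]`,
whose determinant is `det (Q1ᵀR)`; and `det Q = ±1`.
-/

theorem Matrix.abs_det_eq_one_of_transpose_mul_self_eq_one {n R : Type*} [Fintype n]
    [DecidableEq n] [CommRing R] [LinearOrder R] [IsStrictOrderedRing R] {A : Matrix n n R}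
    (hA : Aᵀ * A = 1) : |A.det| = 1 := by
  have hdet : |A.det| * |A.det| = 1 := by
    have := congrArg det hA
    rwa [det_mul, det_transpose, det_one, ← abs_mul_abs_self] at this
  rcases mul_self_eq_one_iff.mp hdet with h | h
  · exact h
  · linarith [abs_nonneg A.det]

def finSplitEquiv {N M K : ℕ} (h : M + K = N) : Fin N ≃ Fin M ⊕ Fin K :=
  (finCongr h.symm).trans finSumFinEquiv.symm

section catCols

variable {N M K : ℕ} (h : M + K = N)

theorem catCols_eq_submatrix (X : Matrix (Fin N) (Fin M) ℝ) (Y : Matrix (Fin N) (Fin K) ℝ) :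
    catCols h X Y = (fromCols X Y).submatrix id (finSplitEquiv h) :=
  rfl

theorem transpose_catCols_mul_catCols (A X : Matrix (Fin N) (Fin M) ℝ)
    (B Y : Matrix (Fin N) (Fin K) ℝ) :
    (catCols h A B)ᵀ * catCols h X Y =
      (fromBlocks (Aᵀ * X) (Aᵀ * Y) (Bᵀ * X) (Bᵀ * Y)).submatrix
        (finSplitEquiv h) (finSplitEquiv h) := by
  rw [catCols_eq_submatrix, catCols_eq_submatrix, transpose_submatrix, transpose_fromCols,
    ← fromRows_mul_fromCols, ← submatrix_mul_equiv _ _ _ (Equiv.refl _)]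
  rfl

theorem transpose_mul_eq_zero_and_transpose_mul_self_eq_one
    {Q1 : Matrix (Fin N) (Fin M) ℝ} {Q2 : Matrix (Fin N) (Fin K) ℝ}
    (hQ : (catCols h Q1 Q2)ᵀ * catCols h Q1 Q2 = 1) :
    Q1ᵀ * Q2 = 0 ∧ Q2ᵀ * Q2 = 1 := by
  have hblocks := congrArg (submatrix · (finSplitEquiv h).symm (finSplitEquiv h).symm) hQ
  simp only [transpose_catCols_mul_catCols, submatrix_submatrix, Equiv.self_comp_symm,
    submatrix_id_id, submatrix_one_equiv, ← fromBlocks_one, fromBlocks_inj] at hblocks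
  exact ⟨hblocks.2.1, hblocks.2.2.2⟩

end catCols

/-- if `Q = [Q1 | Q2]` is an `N × N` orthogonal matrix (`Q1` the first `M`
columns, `Q2` the last `K`), then for every `N × M` matrix `R`,
`|det [R | Q2]| = |det (Q1ᵀ * R)|`. -/
theorem statement2 {M N K : ℕ} (hK : M + K = N)
    (Q1 : Matrix (Fin N) (Fin M) ℝ) (Q2 : Matrix (Fin N) (Fin K) ℝ)
    (hQ : (catCols hK Q1 Q2)ᵀ * (catCols hK Q1 Q2) = 1)
    (R : Matrix (Fin N) (Fin M) ℝ) :
    |(catCols hK R Q2).det| = |(Q1ᵀ * R).det| := by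
  obtain ⟨h12, h22⟩ := transpose_mul_eq_zero_and_transpose_mul_self_eq_one hK hQ
  have hdet : (catCols hK Q1 Q2)ᵀ.det * (catCols hK R Q2).det = (Q1ᵀ * R).det := by
    rw [← det_mul, transpose_catCols_mul_catCols, det_submatrix_equiv_self, h12, h22,
      det_fromBlocks_zero₁₂, det_one, mul_one]
  rw [← hdet, abs_mul, det_transpose, abs_det_eq_one_of_transpose_mul_self_eq_one hQ, one_mul]
end

section
/- Let ν be an M×N real matrix of rank M, K = N − M, R an N×M real matrix, c¹,…,c^K a basis of ker ν assembled into the N×K matrix C, and A = [R | C]. Suppose Γ₁,…,Γ_L are pairwise non-intersecting buffering structures: for s = 1,…,L there are pairwise disjoint chemical subsets 𝔪_s, pairwise disjoint reaction subsets 𝔫_s, and pairwise disjoint kernel-index subsets I_s such that (i) R(n,m) = 0 for every m ∈ 𝔪_s and n ∉ 𝔫_s; (ii) c^α(n) = 0 for every α ∈ I_s and n ∉ 𝔫_s; and (iii) |𝔪_s| + |I_s| = |𝔫_s|. Let A_{Γs} be the submatrix of A with rows 𝔫_s and columns 𝔪_s ∪ I_s, and let A_{Γ̄} be the submatrix with rows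 the complement of 𝔫₁∪…∪𝔫_L and columns the complement of 𝔪₁∪…∪𝔪_L together with the kernel columns not in I₁∪…∪I_L. Then |det(A)| = (∏_{s=1}^{L} |det(A_{Γs})|) · |det(A_{Γ̄})|. -/
/-!
Order the reactions as `𝔫₁, …, 𝔫_L`, then the rest, and the columns of `A` as
`𝔪₁ ∪ I₁, …, 𝔪_L ∪ I_L`, then the rest. Output-completeness says that the columns of
`𝔪_s ∪ I_s` vanish outside the rows `𝔫_s`, so the reordered matrix is block upper triangular
with diagonal blocks `A_{Γ₁}, …, A_{Γ_L}, A_{Γ̄}`; reordering changes `det A` only by a sign.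
-/

open Matrix

/-- The submatrix of the augmented matrix `[R | C]` with rows restricted to the reactions
satisfying `Pn` and columns restricted to the chemicals satisfying `Pm` together with the
kernel columns satisfying `Pk`. -/
def subBlock {M N K : ℕ} (R : Matrix (Fin N) (Fin M) ℝ) (C : Matrix (Fin N) (Fin K) ℝ)
    (Pn : Fin N → Prop) (Pm : Fin M → Prop) (Pk : Fin K → Prop) :
    Matrix {n // Pn n} ({m // Pm m} ⊕ {α // Pk α}) ℝ :=
  Matrix.fromCols (R.submatrix (fun i => i.1) (fun j => j.1))
    (C.submatrix (fun i => i.1) (fun j => j.1))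

open Function

theorem Matrix.det_blockDiagonal' {ι R : Type*} [Fintype ι] [DecidableEq ι] [CommRing R]
    {α : ι → Type*} [∀ i, Fintype (α i)] [∀ i, DecidableEq (α i)]
    (D : ∀ i, Matrix (α i) (α i) R) :
    (blockDiagonal' D).det = ∏ i, (D i).det := by
  let : LinearOrder ι := LinearOrder.lift' _ (Fintype.equivFin ι).injective
  rw [(blockTriangular_blockDiagonal' D).det_fintype]
  refine Finset.prod_congr rfl fun i _ => ?_
  rw [← det_reindex_self (Equiv.sigmaSubtype i)]
  congr 1
  ext a b
  exact blockDiagonal'_apply_eq D i a b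

namespace Finset

variable {ι γ δ : Type*} (F : ι → Finset γ) (G : ι → Finset δ)
  (hF : Pairwise (Disjoint on F)) (hG : Pairwise (Disjoint on G))

include hF in
theorem bijective_sumElim_sigma_compl :
    Function.Bijective (Sum.elim (fun p : Σ s, F s => (p.2 : γ))
      (fun x : {x // ∀ s, x ∉ F s} => x.1)) := by
  constructor
  · rintro (⟨s, x, hx⟩ | ⟨x, hx⟩) (⟨t, y, hy⟩ | ⟨y, hy⟩) (h : x = y)
    · subst h
      obtain rfl : s = t := by_contra fun hst => disjoint_left.mp (hF hst) hx hy
      rfl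
    · exact absurd (h ▸ hx) (hy s)
    · exact absurd (h ▸ hy) (hx t)
    · subst h; rfl
  · intro x
    by_cases h : ∃ s, x ∈ F s
    · obtain ⟨s, hs⟩ := h
      exact ⟨Sum.inl ⟨s, x, hs⟩, rfl⟩
    · exact ⟨Sum.inr ⟨x, fun s hs => h ⟨s, hs⟩⟩, rfl⟩

noncomputable def sigmaSumComplEquiv : (Σ s, F s) ⊕ {x // ∀ s, x ∉ F s} ≃ γ :=
  Equiv.ofBijective _ (bijective_sumElim_sigma_compl F hF)

@[simp]
theorem sigmaSumComplEquiv_inl (p : Σ s, F s) : sigmaSumComplEquiv F hF (Sum.inl p) = p.2 := rfl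

@[simp]
theorem sigmaSumComplEquiv_inr (x : {x // ∀ s, x ∉ F s}) :
    sigmaSumComplEquiv F hF (Sum.inr x) = x.1 := rfl

noncomputable def sigmaSumComplEquivSum :
    (Σ s, F s ⊕ G s) ⊕ ({x // ∀ s, x ∉ F s} ⊕ {y // ∀ s, y ∉ G s}) ≃ γ ⊕ δ :=
  ((Equiv.sigmaSumDistrib _ _).sumCongr (Equiv.refl _)).trans <|
    (Equiv.sumSumSumComm _ _ _ _).trans <|
      (sigmaSumComplEquiv F hF).sumCongr (sigmaSumComplEquiv G hG)

@[simp]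
theorem sigmaSumComplEquivSum_inl (s : ι) (x : F s ⊕ G s) :
    sigmaSumComplEquivSum F G hF hG (Sum.inl ⟨s, x⟩) =
      Sum.map Subtype.val Subtype.val x := by
  rcases x with x | x <;> rfl

@[simp]
theorem sigmaSumComplEquivSum_inr (x : {x // ∀ s, x ∉ F s} ⊕ {y // ∀ s, y ∉ G s}) :
    sigmaSumComplEquivSum F G hF hG (Sum.inr x) = Sum.map Subtype.val Subtype.val x := by
  rcases x with x | x <;> rfl

end Finset

theorem Matrix.abs_det_submatrix_eq_prod_mul_of_blockTriangular {R : Type*} [CommRing R]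
    [LinearOrder R] [IsStrictOrderedRing R] {ι p m n b d : Type*} [Fintype ι] [DecidableEq ι]
    {a c : ι → Type*} [∀ s, Fintype (a s)] [∀ s, DecidableEq (a s)] [Fintype b] [DecidableEq b]
    [Fintype p] [DecidableEq p] (A : Matrix m n R) (f : p ≃ m) (g : p ≃ n)
    (ρ : (Σ s, a s) ⊕ b ≃ m) (τ : (Σ s, c s) ⊕ d ≃ n) (e : ∀ s, a s ≃ c s) (e' : b ≃ d)
    (hoff : ∀ s t i j, s ≠ t → A (ρ (.inl ⟨s, i⟩)) (τ (.inl ⟨t, j⟩)) = 0)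
    (hlow : ∀ x t j, A (ρ (.inr x)) (τ (.inl ⟨t, j⟩)) = 0) :
    |(A.submatrix f g).det| =
      (∏ s, |(A.submatrix (fun i => ρ (.inl ⟨s, i⟩)) (fun j => τ (.inl ⟨s, e s j⟩))).det|) *
        |(A.submatrix (fun x => ρ (.inr x)) (fun x => τ (.inr (e' x)))).det| := by
  set σ := (Equiv.sumCongr (Equiv.sigmaCongrRight e) e').trans τ
  have hblocks : A.submatrix ρ σ = fromBlocks
      (blockDiagonal' fun s =>
        A.submatrix (fun i => ρ (.inl ⟨s, i⟩)) (fun j => τ (.inl ⟨s, e s j⟩)))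
      (A.submatrix ρ σ).toBlocks₁₂ 0
      (A.submatrix (fun x => ρ (.inr x)) (fun x => τ (.inr (e' x)))) := by
    rw [← fromBlocks_toBlocks (A.submatrix ρ σ)]
    congr 1
    · ext ⟨s, i⟩ ⟨t, j⟩
      rcases eq_or_ne s t with rfl | hst
      · rw [blockDiagonal'_apply_eq]; rfl
      · rw [blockDiagonal'_apply_ne _ _ _ hst]; exact hoff s t i (e t j) hst
    · ext x ⟨t, j⟩
      exact hlow x t (e t j)
  calc |(A.submatrix f g).det|
      = |((A.submatrix f g).submatrix (ρ.trans f.symm) (σ.trans g.symm)).det| :=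
        (abs_det_submatrix_equiv_equiv _ _ _).symm
    _ = |(A.submatrix ρ σ).det| := by simp [submatrix_submatrix, Function.comp_def]
    _ = _ := by
      rw [hblocks, det_fromBlocks_zero₂₁, det_blockDiagonal', abs_mul, Finset.abs_prod]

theorem subBlock_eq_submatrix {M N K : ℕ} (R : Matrix (Fin N) (Fin M) ℝ)
    (C : Matrix (Fin N) (Fin K) ℝ) (Pn : Fin N → Prop) (Pm : Fin M → Prop) (Pk : Fin K → Prop) :
    subBlock R C Pn Pm Pk =
      (fromCols R C).submatrix Subtype.val (Sum.map Subtype.val Subtype.val) := by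
  ext i (j | j) <;> rfl

theorem statement9_general {M N K L : ℕ} (hK : M + K = N)
    (R : Matrix (Fin N) (Fin M) ℝ) (C : Matrix (Fin N) (Fin K) ℝ)
    (𝔪 : Fin L → Finset (Fin M)) (𝔫 : Fin L → Finset (Fin N)) (I : Fin L → Finset (Fin K))
    (hmdisj : ∀ s t, s ≠ t → Disjoint (𝔪 s) (𝔪 t))
    (hndisj : ∀ s t, s ≠ t → Disjoint (𝔫 s) (𝔫 t))
    (hIdisj : ∀ s t, s ≠ t → Disjoint (I s) (I t))
    (h1 : ∀ s, ∀ m ∈ 𝔪 s, ∀ n ∉ 𝔫 s, R n m = 0)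
    (h2 : ∀ s, ∀ α ∈ I s, ∀ n ∉ 𝔫 s, C n α = 0)
    (e : ∀ s, {n // n ∈ 𝔫 s} ≃ ({m // m ∈ 𝔪 s} ⊕ {α // α ∈ I s}))
    (e' : {n : Fin N // ∀ s, n ∉ 𝔫 s} ≃
        ({m : Fin M // ∀ s, m ∉ 𝔪 s} ⊕ {α : Fin K // ∀ s, α ∉ I s})) :
    |(catCols hK R C).det| =
      (∏ s, |((subBlock R C (· ∈ 𝔫 s) (· ∈ 𝔪 s) (· ∈ I s)).submatrix id (e s)).det|) *
      |((subBlock R C (fun n => ∀ s, n ∉ 𝔫 s) (fun m => ∀ s, m ∉ 𝔪 s)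
          (fun α => ∀ s, α ∉ I s)).submatrix id e').det| := by
  have hvanish : ∀ t, ∀ n ∉ 𝔫 t, ∀ j : 𝔪 t ⊕ I t,
      fromCols R C n (Sum.map Subtype.val Subtype.val j) = 0 := by
    rintro t n hn (⟨m, hm⟩ | ⟨α, hα⟩)
    exacts [h1 t m hm n hn, h2 t α hα n hn]
  have hm : Pairwise (Disjoint on 𝔪) := fun s t => hmdisj s t
  have hn : Pairwise (Disjoint on 𝔫) := fun s t => hndisj s t
  have hI : Pairwise (Disjoint on I) := fun s t => hIdisj s t
  have hfactor := (fromCols R C).abs_det_submatrix_eq_prod_mul_of_blockTriangular (Equiv.refl _)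
    ((finCongr hK.symm).trans finSumFinEquiv.symm) (Finset.sigmaSumComplEquiv 𝔫 hn)
    (Finset.sigmaSumComplEquivSum 𝔪 I hm hI) e e'
    (fun s t i j hst => by simpa using hvanish t i (Finset.disjoint_left.mp (hn hst) i.2) j)
    (fun x t j => by simpa using hvanish t x (x.2 t) j)
  simpa [catCols, subBlock_eq_submatrix, submatrix_submatrix, Function.comp_def] using hfactor

/-- factorization of `|det A|` along `L` pairwise non-intersecting buffering
structures `Γ₁, …, Γ_L`:
`|det A| = (∏ s, |det A_{Γ s}|) * |det A_{Γ̄}|`. -/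
theorem statement9 {M N K L : ℕ} (hK : M + K = N)
    (ν : Matrix (Fin M) (Fin N) ℝ) (hrank : ν.rank = M)
    (R : Matrix (Fin N) (Fin M) ℝ) (C : Matrix (Fin N) (Fin K) ℝ)
    (hC : ∃ b : Module.Basis (Fin K) ℝ (LinearMap.ker ν.mulVecLin),
        ∀ k n, (b k).1 n = C n k)
    (𝔪 : Fin L → Finset (Fin M)) (𝔫 : Fin L → Finset (Fin N)) (I : Fin L → Finset (Fin K))
    (hmdisj : ∀ s t, s ≠ t → Disjoint (𝔪 s) (𝔪 t))
    (hndisj : ∀ s t, s ≠ t → Disjoint (𝔫 s) (𝔫 t))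
    (hIdisj : ∀ s t, s ≠ t → Disjoint (I s) (I t))
    (h1 : ∀ s, ∀ m ∈ 𝔪 s, ∀ n ∉ 𝔫 s, R n m = 0)
    (h2 : ∀ s, ∀ α ∈ I s, ∀ n ∉ 𝔫 s, C n α = 0)
    (h3 : ∀ s, (𝔪 s).card + (I s).card = (𝔫 s).card)
    (e : ∀ s, {n // n ∈ 𝔫 s} ≃ ({m // m ∈ 𝔪 s} ⊕ {α // α ∈ I s}))
    (e' : {n : Fin N // ∀ s, n ∉ 𝔫 s} ≃
        ({m : Fin M // ∀ s, m ∉ 𝔪 s} ⊕ {α : Fin K // ∀ s, α ∉ I s})) :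
    |(catCols hK R C).det| =
      (∏ s, |((subBlock R C (· ∈ 𝔫 s) (· ∈ 𝔪 s) (· ∈ I s)).submatrix id (e s)).det|) *
      |((subBlock R C (fun n => ∀ s, n ∉ 𝔫 s) (fun m => ∀ s, m ∉ 𝔪 s)
          (fun α => ∀ s, α ∉ I s)).submatrix id e').det| :=
  statement9_general hK R C 𝔪 𝔫 I hmdisj hndisj hIdisj h1 h2 e e'
end
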